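/- arXiv:2210.14720 — 2 statements merged into one kernel-verified Lean document; each statement's English description precedes it below -/
import Mathlib

section
/- For f in e_{-α}L^1(T^n_α) and k ∈ Z^n, F_α(f)(m - k) = F_α[e^{2π i (k·x) csc α} f](m) · e^{-2π i (m·k) cot α} · e^{π i |k|^2 cot α}. -/
open MeasureTheory Filter

noncomputable section

/-- The fractional torus, realized as the cube `[-|sin α|/2, |sin α|/2]^n`. -/
def Tor (α : ℝ) (n : ℕ) : Set (Fin n → ℝ) :=
  Set.univ.pi fun _ => Set.Icc (-(|Real.sin α| / 2)) (|Real.sin α| / 2)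

/-- The chirp `e_α(x) = e^{π i |x|² cot α}`. -/
def eA (α : ℝ) {n : ℕ} (x : Fin n → ℝ) : ℂ :=
  Complex.exp (Complex.I * ((Real.pi * (∑ i, x i ^ 2) * (Real.cos α / Real.sin α) : ℝ) : ℂ))

/-- `A_α = √(1 - i cot α)`. -/
def Acoef (α : ℝ) : ℂ := (1 - Complex.I * ((Real.cos α / Real.sin α : ℝ) : ℂ)) ^ (1 / 2 : ℂ)

/-- The kernel `K_α(m,x) = A_α^n e_α(x) e^{-2π i (m·x) csc α} e_α(m)`. -/
def Kk (α : ℝ) {n : ℕ} (m : Fin n → ℤ) (x : Fin n → ℝ) : ℂ :=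
  Acoef α ^ n * eA α x *
    Complex.exp (-(Complex.I * ((2 * Real.pi * (∑ i, (m i : ℝ) * x i) / Real.sin α : ℝ) : ℂ))) *
    eA α fun i => (m i : ℝ)

/-- The `m`-th fractional Fourier coefficient of order `α`. -/
def Fcoef (α : ℝ) {n : ℕ} (f : (Fin n → ℝ) → ℂ) (m : Fin n → ℤ) : ℂ :=
  ∫ x in Tor α n, f x * Kk α m x

/-- `|sin α|`-periodicity in every coordinate. -/
def Per (α : ℝ) {n : ℕ} (f : (Fin n → ℝ) → ℂ) : Prop :=
  ∀ (x : Fin n → ℝ) (k : Fin n → ℤ), f (fun i => x i + k i * |Real.sin α|) = f x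

theorem stmt2 (α : ℝ) (hα : ∀ k : ℤ, α ≠ k * Real.pi) (n : ℕ)
    (f : (Fin n → ℝ) → ℂ) (hper : Per α fun x => eA α x * f x)
    (hf : IntegrableOn (fun x => eA α x * f x) (Tor α n))
    (k m : Fin n → ℤ) :
    Fcoef α f (m - k)
      = Fcoef α (fun x =>
          Complex.exp (Complex.I * ((2 * Real.pi * (∑ i, (k i : ℝ) * x i) / Real.sin α : ℝ) : ℂ))
            * f x) m
        * Complex.exp (-(Complex.I *
            ((2 * Real.pi * (∑ i, (m i : ℝ) * (k i : ℝ)) * (Real.cos α / Real.sin α) : ℝ) : ℂ)))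
        * eA α (fun i => (k i : ℝ)) := by
  unfold Fcoef
  rw [eA, ← MeasureTheory.integral_mul_const, ← MeasureTheory.integral_mul_const]
  refine MeasureTheory.integral_congr_ae (Filter.Eventually.of_forall fun x => ?_)
  have hL : f x * Kk α (m - k) x = Acoef α ^ n * f x * Complex.exp
      (Complex.I * ((Real.pi * (∑ i, x i ^ 2) * (Real.cos α / Real.sin α) : ℝ) : ℂ)
        + (-(Complex.I * ((2 * Real.pi * (∑ i, ((m - k) i : ℝ) * x i) / Real.sin α : ℝ) : ℂ)))
        + Complex.I * ((Real.pi * (∑ i, ((m - k) i : ℝ) ^ 2) * (Real.cos α / Real.sin α) : ℝ) : ℂ)) := by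
    simp only [Kk, eA, Complex.exp_add]
    ring
  have hR : Complex.exp (Complex.I * ((2 * Real.pi * (∑ i, (k i : ℝ) * x i) / Real.sin α : ℝ) : ℂ))
        * f x * Kk α m x
      * Complex.exp (-(Complex.I *
          ((2 * Real.pi * (∑ i, (m i : ℝ) * (k i : ℝ)) * (Real.cos α / Real.sin α) : ℝ) : ℂ)))
      * Complex.exp (Complex.I * ((Real.pi * (∑ i, ((k i : ℝ)) ^ 2) * (Real.cos α / Real.sin α) : ℝ) : ℂ))
      = Acoef α ^ n * f x * Complex.exp
      (Complex.I * ((2 * Real.pi * (∑ i, (k i : ℝ) * x i) / Real.sin α : ℝ) : ℂ)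
        + Complex.I * ((Real.pi * (∑ i, x i ^ 2) * (Real.cos α / Real.sin α) : ℝ) : ℂ)
        + (-(Complex.I * ((2 * Real.pi * (∑ i, (m i : ℝ) * x i) / Real.sin α : ℝ) : ℂ)))
        + Complex.I * ((Real.pi * (∑ i, (m i : ℝ) ^ 2) * (Real.cos α / Real.sin α) : ℝ) : ℂ)
        + (-(Complex.I * ((2 * Real.pi * (∑ i, (m i : ℝ) * (k i : ℝ)) * (Real.cos α / Real.sin α) : ℝ) : ℂ)))
        + Complex.I * ((Real.pi * (∑ i, ((k i : ℝ)) ^ 2) * (Real.cos α / Real.sin α) : ℝ) : ℂ)) := by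
    simp only [Kk, eA, Complex.exp_add]
    ring
  dsimp only
  rw [hL, hR]
  congr 1
  push_cast [Pi.sub_apply]
  simp only [sub_mul, mul_sub, sub_sq, two_mul, add_mul, Finset.sum_sub_distrib, Finset.sum_add_distrib]
  ring
end
end

section
/- Every function f on T^n_α with e_α f continuous and |sin α|-periodic is a uniform limit of trigonometric polynomials of order α (fractional Weierstrass approximation theorem). -/
open MeasureTheory Filter

noncomputable section

/-! Since `K_{-α}(m, x) = A_{-α}^n e_{-α}(m) e_{-α}(x) e^{2π i (m·x) / sin α}` and `|e_{-α}| = 1`,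
approximating `f` by trigonometric polynomials of order `α` is the same as approximating the
continuous, `sin α`-periodic function `e_α f` by ordinary trigonometric polynomials in
`x / sin α`. That function descends along `x ↦ x / sin α` to a continuous function on the unit
torus, where the span of the characters is dense by Stone–Weierstrass. -/

open Complex Real UnitAddTorus Topology

section TorusProjection

variable {d : Type*}

def torusProj (L : ℝ) (x : d → ℝ) : UnitAddTorus d := fun i => ((x i / L : ℝ) : UnitAddCircle)

theorem isQuotientMap_torusProj {L : ℝ} (hL : L ≠ 0) : IsQuotientMap (torusProj (d := d) L) :=
  ((IsOpenQuotientMap.piMap fun _ => QuotientAddGroup.isOpenQuotientMap_mk).comp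
    (Homeomorph.piCongrRight fun _ => Homeomorph.mulRight₀ L⁻¹ (inv_ne_zero hL)).isOpenQuotientMap
    ).isQuotientMap

theorem exists_eq_add_mul_of_torusProj_eq {L : ℝ} (hL : L ≠ 0) {x y : d → ℝ}
    (h : torusProj L x = torusProj L y) : ∃ k : d → ℤ, x = fun i => y i + k i * L := by
  have hk (i : d) : ∃ k : ℤ, x i = y i + k * L := by
    obtain ⟨k, hk⟩ := AddSubgroup.mem_zmultiples_iff.mp (QuotientAddGroup.eq.mp (congrFun h i))
    refine ⟨-k, ?_⟩
    rw [zsmul_eq_mul, mul_one] at hk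
    field_simp at hk
    push_cast
    linarith
  choose k hk using hk
  exact ⟨k, funext hk⟩

theorem exists_continuousMap_comp_torusProj [Fintype d] {Z : Type*} [TopologicalSpace Z]
    {L : ℝ} (hL : L ≠ 0) {g : (d → ℝ) → Z} (hg : Continuous g)
    (hper : ∀ x (k : d → ℤ), g (fun i => x i + k i * L) = g x) :
    ∃ G : C(UnitAddTorus d, Z), ∀ x, G (torusProj L x) = g x := by
  have hfactor : Function.FactorsThrough g (torusProj L) := fun x y hxy => by
    obtain ⟨k, rfl⟩ := exists_eq_add_mul_of_torusProj_eq hL hxy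
    exact hper y k
  have hq := isQuotientMap_torusProj (d := d) hL
  let q : C(d → ℝ, UnitAddTorus d) := ⟨torusProj L, hq.continuous⟩
  exact ⟨hq.lift (f := q) ⟨g, hg⟩ hfactor,
    DFunLike.congr_fun (hq.lift_comp (f := q) ⟨g, hg⟩ hfactor)⟩

theorem mFourier_torusProj [Fintype d] (L : ℝ) (m : d → ℤ) (x : d → ℝ) :
    mFourier m (torusProj L x) = exp (I * ((2 * π * (∑ i, (m i : ℝ) * x i) / L : ℝ) : ℂ)) := by
  simp only [mFourier, ContinuousMap.coe_mk, torusProj, fourier_coe_apply, ← Complex.exp_sum]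
  congr 1
  push_cast
  rw [Finset.mul_sum, Finset.sum_div, Finset.mul_sum]
  refine Finset.sum_congr rfl fun i _ => ?_
  ring

theorem exists_sum_mFourier_near [Fintype d] (G : C(UnitAddTorus d, ℂ)) {ε : ℝ} (hε : 0 < ε) :
    ∃ (s : Finset (d → ℤ)) (c : (d → ℤ) → ℂ), ∀ y, ‖G y - ∑ m ∈ s, c m * mFourier m y‖ < ε := by
  have hG : G ∈ closure
      (Submodule.span ℂ (Set.range (mFourier (d := d))) : Set C(UnitAddTorus d, ℂ)) := by
    rw [← Submodule.topologicalClosure_coe, span_mFourier_closure_eq_top]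
    trivial
  obtain ⟨F, hF, hGF⟩ := Metric.mem_closure_iff.mp hG ε hε
  obtain ⟨c, rfl⟩ := Finsupp.mem_span_range_iff_exists_finsupp.mp hF
  refine ⟨c.support, c, fun y => ?_⟩
  calc ‖G y - ∑ m ∈ c.support, c m * mFourier m y‖
      = dist (G y) ((c.sum fun m a => a • mFourier m) y) := by
        simp [dist_eq_norm, Finsupp.sum]
    _ ≤ dist G (c.sum fun m a => a • mFourier m) := ContinuousMap.dist_apply_le_dist y
    _ < ε := hGF

theorem exists_sum_exp_near_of_periodic [Fintype d] {L : ℝ} (hL : L ≠ 0) {g : (d → ℝ) → ℂ}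
    (hg : Continuous g) (hper : ∀ x (k : d → ℤ), g (fun i => x i + k i * L) = g x)
    {ε : ℝ} (hε : 0 < ε) :
    ∃ (s : Finset (d → ℤ)) (c : (d → ℤ) → ℂ), ∀ x,
      ‖g x - ∑ m ∈ s, c m * exp (I * ((2 * π * (∑ i, (m i : ℝ) * x i) / L : ℝ) : ℂ))‖ < ε := by
  obtain ⟨G, hG⟩ := exists_continuousMap_comp_torusProj hL hg hper
  obtain ⟨s, c, hc⟩ := exists_sum_mFourier_near G hε
  refine ⟨s, c, fun x => ?_⟩
  simpa only [hG, mFourier_torusProj] using hc (torusProj L x)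

end TorusProjection

theorem Per.add_mul_sin {α : ℝ} {n : ℕ} {g : (Fin n → ℝ) → ℂ} (h : Per α g)
    (x : Fin n → ℝ) (k : Fin n → ℤ) : g (fun i => x i + k i * Real.sin α) = g x := by
  rcases abs_choice (Real.sin α) with hs | hs
  · simpa only [hs] using h x k
  · simpa [hs] using h x (-k)

theorem norm_eA (α : ℝ) {n : ℕ} (x : Fin n → ℝ) : ‖eA α x‖ = 1 := by
  rw [eA, mul_comm]
  exact norm_exp_ofReal_mul_I _

theorem eA_neg_mul_eA (α : ℝ) {n : ℕ} (x : Fin n → ℝ) : eA (-α) x * eA α x = 1 := by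
  rw [eA, eA, ← Complex.exp_add, Real.cos_neg, Real.sin_neg, div_neg]
  push_cast
  ring_nf
  exact exp_zero

theorem Acoef_ne_zero (α : ℝ) : Acoef α ≠ 0 := by
  refine (cpow_ne_zero_iff_of_exponent_ne_zero (by norm_num)).mpr fun h => ?_
  simpa only [sub_re, one_re, mul_re, I_re, I_im, ofReal_re, ofReal_im, zero_re, zero_mul,
    one_mul, sub_zero, one_ne_zero] using congrArg re h

theorem Kk_neg (α : ℝ) {n : ℕ} (m : Fin n → ℤ) (x : Fin n → ℝ) :
    Kk (-α) m x = Acoef (-α) ^ n * eA (-α) (fun i => (m i : ℝ)) * eA (-α) x *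
      exp (I * ((2 * π * (∑ i, (m i : ℝ) * x i) / Real.sin α : ℝ) : ℂ)) := by
  rw [Kk, Real.sin_neg, div_neg]
  push_cast
  ring_nf

theorem stmt12 (α : ℝ) (hα : ∀ k : ℤ, α ≠ k * Real.pi) (n : ℕ)
    (f : (Fin n → ℝ) → ℂ)
    (hper : Per α fun x => eA α x * f x)
    (hc : Continuous fun x => eA α x * f x)
    (ε : ℝ) (hε : 0 < ε) :
    ∃ (s : Finset (Fin n → ℤ)) (c : (Fin n → ℤ) → ℂ),
      ∀ x ∈ Tor α n, ‖f x - ∑ m ∈ s, c m * Kk (-α) m x‖ < ε := by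
  have hsin : Real.sin α ≠ 0 := fun h => by
    obtain ⟨k, hk⟩ := Real.sin_eq_zero_iff.mp h
    exact hα k hk.symm
  obtain ⟨s, c, hs⟩ := exists_sum_exp_near_of_periodic hsin hc hper.add_mul_sin hε
  refine ⟨s, fun m => c m / (Acoef (-α) ^ n * eA (-α) fun i => (m i : ℝ)), fun x _ => ?_⟩
  have hcoef (m : Fin n → ℤ) : Acoef (-α) ^ n * eA (-α) (fun i => (m i : ℝ)) ≠ 0 :=
    mul_ne_zero (pow_ne_zero _ (Acoef_ne_zero _)) (exp_ne_zero _)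
  calc ‖f x - ∑ m ∈ s, c m / (Acoef (-α) ^ n * eA (-α) fun i => (m i : ℝ)) * Kk (-α) m x‖
      = ‖eA (-α) x * (eA α x * f x - ∑ m ∈ s,
          c m * exp (I * ((2 * π * (∑ i, (m i : ℝ) * x i) / Real.sin α : ℝ) : ℂ)))‖ := by
        rw [mul_sub, ← mul_assoc, eA_neg_mul_eA, one_mul, Finset.mul_sum]
        congr 2
        refine Finset.sum_congr rfl fun m _ => ?_
        rw [Kk_neg, div_mul_eq_mul_div, div_eq_iff (hcoef m)]
        ring
    _ < ε := by
        rw [norm_mul, norm_eA, one_mul]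
        exact hs x
end
end
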